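/- Let f be a bounded probability density and Ψ square-integrable. Then ∫ (Ψ_h² * f)(x) f(x) dx = h^{−1} R(Ψ) R(f) + o(h^{−1}) as h → 0, where Ψ_h(u) = Ψ(u/h)/h, R(g) = ∫ g², provided additionally that f is C² with bounded f'' and ∫ u² Ψ(u)² du < ∞. In particular the integral is O(h^{−1}). -/

import Mathlib

/-!
After the substitution `y = x - h u` the inner integral is `h⁻¹ ∫ Ψ(u)² f(x - h u) du`.
As `f` is `M`-Lipschitz, this is `h⁻¹ R(Ψ) f(x)` up to an error `M ∫ |u| Ψ(u)² du`,
uniformly in `x`, and `|u| ≤ 1 + u²` makes that constant finite. Integrating against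
`f ∈ L¹`, the remainder is `O(1)`, which is `o(h⁻¹)`.
-/

open MeasureTheory Filter Asymptotics
open scoped Topology NNReal

theorem integrable_id_mul_of_integrable_sq_mul {w : ℝ → ℝ} (hw : Integrable w)
    (hw2 : Integrable fun u => u ^ 2 * w u) : Integrable fun u => u * w u := by
  refine (hw.norm.add hw2.norm).mono' (measurable_id.aestronglyMeasurable.mul
    hw.aestronglyMeasurable) (.of_forall fun u => ?_)
  have habs : |u| ≤ 1 + u ^ 2 := by nlinarith [sq_abs u, sq_nonneg (|u| - 1)]
  simp only [Pi.add_apply, Real.norm_eq_abs, abs_mul, abs_pow, sq_abs]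
  nlinarith [abs_nonneg (w u)]

theorem integral_comp_sub_div_mul (k f : ℝ → ℝ) {h : ℝ} (hh : 0 < h) (x : ℝ) :
    ∫ y, k ((x - y) / h) * f y = h * ∫ u, k u * f (x - h * u) := by
  have hx : ∀ y, x - h * ((x - y) / h) = y := fun y => by field_simp; ring
  calc ∫ y, k ((x - y) / h) * f y
      = ∫ y, (fun t => k (t / h) * f (x - h * (t / h))) (x - y) := by simp only [hx]
    _ = ∫ t, k (t / h) * f (x - h * (t / h)) :=
      integral_sub_left_eq_self (fun t => k (t / h) * f (x - h * (t / h))) volume x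
    _ = h * ∫ u, k u * f (x - h * u) := by
      rw [Measure.integral_comp_div (fun u => k u * f (x - h * u)), abs_of_pos hh, smul_eq_mul]

theorem integral_sq_div_div_mul (Ψ f : ℝ → ℝ) {h : ℝ} (hh : 0 < h) (x : ℝ) :
    ∫ y, (Ψ ((x - y) / h) / h) ^ 2 * f y = h⁻¹ * ∫ u, Ψ u ^ 2 * f (x - h * u) := by
  calc ∫ y, (Ψ ((x - y) / h) / h) ^ 2 * f y
      = (h ^ 2)⁻¹ * ∫ y, Ψ ((x - y) / h) ^ 2 * f y := by
        rw [← integral_const_mul]; congr 1 with y; ring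
    _ = h⁻¹ * ∫ u, Ψ u ^ 2 * f (x - h * u) := by
      rw [integral_comp_sub_div_mul (fun t => Ψ t ^ 2) f hh]; field_simp

theorem isLittleO_inv_nhdsGT_zero_of_forall_abs_le {F : ℝ → ℝ} {C : ℝ}
    (hF : ∀ h > 0, |F h| ≤ C) : F =o[𝓝[>] 0] fun h => h⁻¹ := by
  have hO : F =O[𝓝[>] 0] fun _ => (1 : ℝ) :=
    .of_bound C (eventually_mem_nhdsWithin.mono fun h hh => by simpa using hF h hh)
  exact hO.trans_isLittleO
    ((isLittleO_one_left_iff ℝ).2 (tendsto_norm_atTop_atTop.comp tendsto_inv_nhdsGT_zero))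

namespace LipschitzWith

variable {K : ℝ≥0} {f w : ℝ → ℝ}

theorem abs_integral_mul_comp_sub_le (hf : LipschitzWith K f) (hw : Integrable w)
    (hw1 : Integrable fun u => u * w u) (x h : ℝ) :
    |(∫ u, w u * f (x - h * u)) - (∫ u, w u) * f x| ≤ K * |h| * ∫ u, |u * w u| := by
  have hpt : ∀ u, ‖w u * (f (x - h * u) - f x)‖ ≤ K * |h| * |u * w u| := fun u => by
    have hlip : |f (x - h * u) - f x| ≤ K * (|h| * |u|) := by
      simpa [Real.dist_eq, abs_mul] using hf.dist_le_mul (x - h * u) x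
    rw [Real.norm_eq_abs, abs_mul, abs_mul]
    calc |w u| * |f (x - h * u) - f x| ≤ |w u| * (K * (|h| * |u|)) := by gcongr
      _ = K * |h| * (|u| * |w u|) := by ring
  have hdiff : Integrable fun u => w u * (f (x - h * u) - f x) :=
    (hw1.abs.const_mul _).mono' (hw.aestronglyMeasurable.mul
      ((hf.continuous.comp (by fun_prop)).sub continuous_const).aestronglyMeasurable)
      (.of_forall hpt)
  have hsplit : (∫ u, w u * f (x - h * u)) - (∫ u, w u) * f x
      = ∫ u, w u * (f (x - h * u) - f x) := by
    have hint : Integrable fun u => w u * f (x - h * u) :=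
      (hdiff.add (hw.mul_const (f x))).congr (.of_forall fun u => by
        simp only [Pi.add_apply]; ring)
    rw [← integral_mul_const, ← integral_sub hint (hw.mul_const _)]
    congr 1 with u; ring
  rw [hsplit, ← integral_const_mul, ← Real.norm_eq_abs]
  exact norm_integral_le_of_norm_le (hw1.abs.const_mul _) (.of_forall hpt)

theorem abs_integral_integral_mul_comp_sub_mul_sub_le (hf : LipschitzWith K f)
    (hw : Integrable w) (hw1 : Integrable fun u => u * w u) {g : ℝ → ℝ} (hg : Integrable g)
    (hfg : Integrable fun x => f x * g x) (h : ℝ) :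
    |(∫ x, (∫ u, w u * f (x - h * u)) * g x) - (∫ u, w u) * ∫ x, f x * g x|
      ≤ K * |h| * (∫ u, |u * w u|) * ∫ x, |g x| := by
  set A := fun x => ∫ u, w u * f (x - h * u)
  set S := ∫ u, w u
  set C := K * |h| * ∫ u, |u * w u|
  have hA : AEStronglyMeasurable A := by
    have hfc := hf.continuous
    refine AEStronglyMeasurable.integral_prod_right'
      (f := fun p : ℝ × ℝ => w p.2 * f (p.1 - h * p.2)) ?_
    exact hw.aestronglyMeasurable.comp_snd.mul (by fun_prop : Continuous _).aestronglyMeasurable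
  have hpt : ∀ x, ‖(A x - S * f x) * g x‖ ≤ C * |g x| := fun x => by
    rw [Real.norm_eq_abs, abs_mul]
    exact mul_le_mul_of_nonneg_right (hf.abs_integral_mul_comp_sub_le hw hw1 x h) (abs_nonneg _)
  have hdiff : Integrable fun x => (A x - S * f x) * g x :=
    (hg.abs.const_mul C).mono' ((hA.sub (hf.continuous.aestronglyMeasurable.const_mul S)).mul
      hg.aestronglyMeasurable) (.of_forall hpt)
  have hsplit : (∫ x, A x * g x) - S * ∫ x, f x * g x = ∫ x, (A x - S * f x) * g x := by
    have hint : Integrable fun x => A x * g x :=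
      (hdiff.add (hfg.const_mul S)).congr (.of_forall fun x => by
        simp only [Pi.add_apply]; ring)
    rw [← integral_const_mul, ← integral_sub hint (hfg.const_mul S)]
    congr 1 with x; ring
  rw [hsplit, ← integral_const_mul, ← Real.norm_eq_abs]
  exact norm_integral_le_of_norm_le (hg.abs.const_mul C) (.of_forall hpt)

end LipschitzWith

theorem convolution_sq_kernel_integral_asymptotics_general
    (f Ψ : ℝ → ℝ)
    (hf : ContDiff ℝ 2 f)
    (hf_int : Integrable f)
    (hf_bdd : ∃ M, ∀ x, |f x| ≤ M ∧ |deriv f x| ≤ M ∧ |deriv (deriv f) x| ≤ M)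
    (hΨ_sq : Integrable (fun u => (Ψ u) ^ 2))
    (hΨ_sq_m2 : Integrable (fun u => u ^ 2 * (Ψ u) ^ 2)) :
    ((fun h : ℝ => (∫ x, (∫ y, (Ψ ((x - y) / h) / h) ^ 2 * f y) * f x)
        - h⁻¹ * (∫ u, (Ψ u) ^ 2) * (∫ x, (f x) ^ 2))
      =o[nhdsWithin 0 (Set.Ioi 0)] (fun h : ℝ => h⁻¹))
    ∧ ((fun h : ℝ => ∫ x, (∫ y, (Ψ ((x - y) / h) / h) ^ 2 * f y) * f x)
      =O[nhdsWithin 0 (Set.Ioi 0)] (fun h : ℝ => h⁻¹)) := by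
  obtain ⟨M, hM⟩ := hf_bdd
  lift M to ℝ≥0 using (abs_nonneg _).trans (hM 0).1
  have hlip : LipschitzWith M f :=
    lipschitzWith_of_nnnorm_deriv_le (hf.differentiable two_ne_zero) fun x => by
      rw [← NNReal.coe_le_coe, coe_nnnorm]; exact (hM x).2.1
  have hff : Integrable fun x => f x * f x :=
    hf_int.bdd_mul hf_int.aestronglyMeasurable (.of_forall fun x => (hM x).1)
  have hbound : ∀ h > 0, |(∫ x, (∫ y, (Ψ ((x - y) / h) / h) ^ 2 * f y) * f x)
      - h⁻¹ * (∫ u, Ψ u ^ 2) * ∫ x, f x ^ 2|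
        ≤ M * (∫ u, |u * Ψ u ^ 2|) * ∫ x, |f x| := by
    intro h hh
    have hrem := hlip.abs_integral_integral_mul_comp_sub_mul_sub_le hΨ_sq
      (integrable_id_mul_of_integrable_sq_mul hΨ_sq hΨ_sq_m2) hf_int hff h
    simp_rw [integral_sq_div_div_mul Ψ f hh, mul_assoc h⁻¹, integral_const_mul, ← mul_sub,
      sq (f _)]
    rw [abs_mul, abs_of_pos (inv_pos.2 hh)]
    calc _ ≤ h⁻¹ * (M * |h| * (∫ u, |u * Ψ u ^ 2|) * ∫ x, |f x|) := by gcongr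
      _ = _ := by rw [abs_of_pos hh]; field_simp
  have ho := isLittleO_inv_nhdsGT_zero_of_forall_abs_le hbound
  refine ⟨ho, ?_⟩
  have hmain :
      (fun h : ℝ => h⁻¹ * (∫ u, Ψ u ^ 2) * ∫ x, f x ^ 2) =O[𝓝[>] 0] fun h => h⁻¹ :=
    (isBigO_const_mul_self ((∫ u, Ψ u ^ 2) * ∫ x, f x ^ 2) _ _).congr_left fun h => by ring
  simpa using ho.isBigO.add hmain

/-- For Ψ_h(u) = Ψ(u/h)/h, one has ∫ (Ψ_h² * f)(x) f(x) dx = h⁻¹R(Ψ)R(f) + o(h⁻¹)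
as h → 0⁺; in particular the integral is O(h⁻¹). -/
theorem convolution_sq_kernel_integral_asymptotics
    (f Ψ : ℝ → ℝ)
    (hf : ContDiff ℝ 2 f)
    (hf_nonneg : ∀ x, 0 ≤ f x)
    (hf_int : Integrable f)
    (hf_prob : ∫ x, f x = 1)
    (hf_bdd : ∃ M, ∀ x, |f x| ≤ M ∧ |deriv f x| ≤ M ∧ |deriv (deriv f) x| ≤ M)
    (hΨ_sq : Integrable (fun u => (Ψ u) ^ 2))
    (hΨ_sq_m2 : Integrable (fun u => u ^ 2 * (Ψ u) ^ 2)) :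
    ((fun h : ℝ => (∫ x, (∫ y, (Ψ ((x - y) / h) / h) ^ 2 * f y) * f x)
        - h⁻¹ * (∫ u, (Ψ u) ^ 2) * (∫ x, (f x) ^ 2))
      =o[nhdsWithin 0 (Set.Ioi 0)] (fun h : ℝ => h⁻¹))
    ∧ ((fun h : ℝ => ∫ x, (∫ y, (Ψ ((x - y) / h) / h) ^ 2 * f y) * f x)
      =O[nhdsWithin 0 (Set.Ioi 0)] (fun h : ℝ => h⁻¹)) :=
  convolution_sq_kernel_integral_asymptotics_general f Ψ hf hf_int hf_bdd hΨ_sq hΨ_sq_m2
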